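/- (Proposition 4.1, optimal spoofing signal for a QPSK Type-I symbol.) Let P ≥ 0 and A ≥ 0. For all real z_R ≥ 0 and z_I ≥ 0 with z_R² + z_I² = A, one has (1/2 + (1/2)·erf(z_R + √(P/2)))·(1/2 + (1/2)·erf(z_I + √(P/2))) ≤ (1/2 + (1/2)·erf(√(A/2) + √(P/2)))². In particular, the success probability is maximized (equivalently, the conditional SSER g₁(A) = 1 − (1/2 + (1/2)·erf(√(A/2) + √(P/2)))² is attained) by the balanced choice z_R = z_I = √(A/2). -/

import Mathlib

/-!
Write `F x = 1/2 + erf x / 2`. Since `erf' x = (2/√π) e^{-x²}` is positive and decreasing on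
`[0, ∞)`, `F` is nonnegative, increasing and concave there. With `c = √(P/2)` the quadratic-mean
bound `(z_R + z_I)/2 ≤ √(A/2)` then gives
`F(z_R + c) F(z_I + c) ≤ ((F(z_R + c) + F(z_I + c))/2)² ≤ F((z_R + z_I)/2 + c)² ≤ F(√(A/2) + c)²`.
-/

open MeasureTheory ProbabilityTheory Real Set

noncomputable def erf (x : ℝ) : ℝ :=
  (2 / Real.sqrt Real.pi) * ∫ t in (0:ℝ)..x, Real.exp (-t^2)

theorem hasDerivAt_erf (x : ℝ) : HasDerivAt erf (2 / √π * exp (-x ^ 2)) x := by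
  have hcont : Continuous fun t : ℝ => exp (-t ^ 2) := by fun_prop
  exact (intervalIntegral.integral_hasDerivAt_right (hcont.intervalIntegrable 0 x)
    hcont.aestronglyMeasurable.stronglyMeasurableAtFilter hcont.continuousAt).const_mul _

theorem differentiable_erf : Differentiable ℝ erf := fun x => (hasDerivAt_erf x).differentiableAt

theorem deriv_erf : deriv erf = fun x => 2 / √π * exp (-x ^ 2) :=
  funext fun x => (hasDerivAt_erf x).deriv

theorem erf_zero : erf 0 = 0 := by simp [erf]

theorem monotone_erf : Monotone erf :=
  monotone_of_deriv_nonneg differentiable_erf fun x => by rw [deriv_erf]; positivity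

theorem erf_nonneg {x : ℝ} (hx : 0 ≤ x) : 0 ≤ erf x := erf_zero ▸ monotone_erf hx

theorem concaveOn_erf : ConcaveOn ℝ (Ici 0) erf := by
  refine AntitoneOn.concaveOn_of_deriv (convex_Ici 0) differentiable_erf.continuous.continuousOn
    differentiable_erf.differentiableOn ?_
  intro x hx y _ hxy
  rw [interior_Ici] at hx
  simp only [deriv_erf]
  gcongr
  exact hx.le

theorem mul_le_sq_of_concaveOn {s : Set ℝ} {f : ℝ → ℝ} (hconc : ConcaveOn ℝ s f)
    (hmono : MonotoneOn f s) (hnonneg : ∀ x ∈ s, 0 ≤ f x) {x y z : ℝ} (hx : x ∈ s) (hy : y ∈ s)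
    (hz : z ∈ s) (hxyz : x + y ≤ 2 * z) : f x * f y ≤ f z ^ 2 := by
  have hhalf := hconc.2 hx hy (by norm_num : (0 : ℝ) ≤ 1 / 2) (by norm_num : (0 : ℝ) ≤ 1 / 2)
    (by norm_num)
  have hmid_mem := hconc.1 hx hy (by norm_num : (0 : ℝ) ≤ 1 / 2) (by norm_num : (0 : ℝ) ≤ 1 / 2)
    (by norm_num)
  have hmid_eq : (1 / 2 : ℝ) • x + (1 / 2 : ℝ) • y = (x + y) / 2 := by simp only [smul_eq_mul]; ring
  rw [hmid_eq] at hhalf hmid_mem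
  simp only [smul_eq_mul] at hhalf
  have hfz : f ((x + y) / 2) ≤ f z := hmono hmid_mem hz (by linarith)
  have hfx := hnonneg x hx
  have hfy := hnonneg y hy
  calc f x * f y ≤ ((f x + f y) / 2) ^ 2 := by nlinarith [sq_nonneg (f x - f y)]
    _ ≤ f z ^ 2 := by gcongr; linarith

theorem add_le_two_mul_sqrt_half {a b A : ℝ} (h : a ^ 2 + b ^ 2 = A) : a + b ≤ 2 * √(A / 2) := by
  have : ((a + b) / 2) ^ 2 ≤ A / 2 := by nlinarith [sq_nonneg (a - b)]
  linarith [(le_abs_self _).trans (Real.abs_le_sqrt this)]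

theorem stmt_10_general (P A : ℝ) :
    ∀ zR zI : ℝ, 0 ≤ zR → 0 ≤ zI → zR^2 + zI^2 = A →
      (1/2 + (1/2) * erf (zR + Real.sqrt (P/2))) *
        (1/2 + (1/2) * erf (zI + Real.sqrt (P/2))) ≤
      (1/2 + (1/2) * erf (Real.sqrt (A/2) + Real.sqrt (P/2)))^2 := by
  intro zR zI hzR hzI hsum
  have hc : 0 ≤ √(P / 2) := sqrt_nonneg _
  have hconc : ConcaveOn ℝ (Ici 0) fun x => 1 / 2 + 1 / 2 * erf x :=
    (concaveOn_const (1 / 2) (convex_Ici 0)).add (concaveOn_erf.smul (by norm_num : (0 : ℝ) ≤ 1 / 2))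
  have hmono : MonotoneOn (fun x => 1 / 2 + 1 / 2 * erf x) (Ici 0) := fun x _ y _ hxy => by
    simpa using monotone_erf hxy
  refine mul_le_sq_of_concaveOn hconc hmono (fun x hx => ?_) (add_nonneg hzR hc)
    (add_nonneg hzI hc) (add_nonneg (sqrt_nonneg _) hc) ?_
  · have := erf_nonneg (mem_Ici.1 hx); positivity
  · linarith [add_le_two_mul_sqrt_half hsum]

theorem stmt_10 (P A : ℝ) (hP : 0 ≤ P) (hA : 0 ≤ A) :
    ∀ zR zI : ℝ, 0 ≤ zR → 0 ≤ zI → zR^2 + zI^2 = A →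
      (1/2 + (1/2) * erf (zR + Real.sqrt (P/2))) *
        (1/2 + (1/2) * erf (zI + Real.sqrt (P/2))) ≤
      (1/2 + (1/2) * erf (Real.sqrt (A/2) + Real.sqrt (P/2)))^2 :=
  stmt_10_general P A
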